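/- If L ⊆ (Σ×{0,1})^ω is recognized by a deterministic max-automaton, then the language { w ∈ Σ^ω : w[X] ∈ L for some finite set X ⊆ ℕ } is also recognized by a deterministic max-automaton. -/

import Mathlib

namespace MaxReg

/-! ### Counter operations and boolean combinations -/

inductive CounterOp (C : Type) where
  | inc (c : C)
  | reset (c : C)
  | output (c : C)
  | maxOp (c d : C)

def applyOp {C : Type} [DecidableEq C] (v : C → ℕ) :
    CounterOp C → (C → ℕ) × Option (C × ℕ)
  | .inc c => (Function.update v c (v c + 1), none)
  | .reset c => (Function.update v c 0, none)
  | .output c => (v, some (c, v c))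
  | .maxOp c d => (Function.update v c (max (v c) (v d)), none)

def applyOps {C : Type} [DecidableEq C] :
    List (CounterOp C) → (C → ℕ) → (C → ℕ) × List (C × ℕ)
  | [], v => (v, [])
  | op :: ops, v =>
      let p := applyOp v op
      let r := applyOps ops p.1
      (r.1, p.2.toList ++ r.2)

/-- Boolean combinations with atoms in `σ` (used for acceptance conditions:
the atom `c` stands for "the sequence of values output on counter `c` is bounded"). -/
inductive BC (σ : Type) where
  | tt
  | atom (a : σ)
  | nt (φ : BC σ)
  | an (φ ψ : BC σ)

def BC.eval {σ : Type} (f : σ → Prop) : BC σ → Prop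
  | .tt => True
  | .atom a => f a
  | .nt φ => ¬ φ.eval f
  | .an φ ψ => φ.eval f ∧ ψ.eval f

/-! ### Deterministic max-automata -/

structure MaxAutomaton (α : Type) where
  Q : Type
  C : Type
  [finQ : Fintype Q]
  [finC : Fintype C]
  [decC : DecidableEq C]
  init : Q
  δ : Q → α → Q × List (CounterOp C)
  acc : BC C

attribute [instance] MaxAutomaton.finQ MaxAutomaton.finC MaxAutomaton.decC

namespace MaxAutomaton

variable {α : Type} (A : MaxAutomaton α)

/-- The state at position `n` of the unique run on `w`, started in state `q`
(at position `0`). -/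
def runFrom (q : A.Q) (w : ℕ → α) : ℕ → A.Q
  | 0 => q
  | n + 1 => (A.δ (runFrom q w n) (w n)).1

/-- Counter values before reading the letter at position `n` (all counters start at `0`). -/
def valsFrom (q : A.Q) (w : ℕ → α) : ℕ → (A.C → ℕ)
  | 0 => fun _ => 0
  | n + 1 => (applyOps (A.δ (A.runFrom q w n) (w n)).2 (valsFrom q w n)).1

/-- The (counter, value) pairs output while reading the letter at position `n`. -/
def outsFrom (q : A.Q) (w : ℕ → α) (n : ℕ) : List (A.C × ℕ) :=
  (applyOps (A.δ (A.runFrom q w n) (w n)).2 (A.valsFrom q w n)).2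

/-- "The sequence `ρ_c` of values output on counter `c` is bounded." -/
def BoundedFrom (q : A.Q) (w : ℕ → α) (c : A.C) : Prop :=
  ∃ B, ∀ n, ∀ p ∈ A.outsFrom q w n, p.1 = c → p.2 ≤ B

def AcceptsFrom (q : A.Q) (w : ℕ → α) : Prop :=
  A.acc.eval (A.BoundedFrom q w)

def Accepts (w : ℕ → α) : Prop := A.AcceptsFrom A.init w

def Lang : Set (ℕ → α) := { w | A.Accepts w }

/-- One step on a configuration (state, counter valuation), for reading finite words. -/
def stepList (p : A.Q × (A.C → ℕ)) (a : α) : A.Q × (A.C → ℕ) :=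
  ((A.δ p.1 a).1, (applyOps (A.δ p.1 a).2 p.2).1)

/-- Configuration (state, counter valuation) reached after reading a finite word
from the initial state with all counters `0`. -/
def readConfig (l : List α) : A.Q × (A.C → ℕ) :=
  l.foldl A.stepList (A.init, fun _ => 0)

end MaxAutomaton

/-! ### Annotating words with sets -/

/-- `w[X]` : extend each letter of `w` with the bit `1` exactly at the positions in `X`. -/
def withSet {α : Type} (w : ℕ → α) (X : Finset ℕ) : ℕ → α × Bool :=
  fun n => (w n, decide (n ∈ X))

/-- `w[X₁,…,Xₙ]` : extend each letter of `w` with a bit vector. -/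
def withSets {α : Type} {n : ℕ} (w : ℕ → α) (Xs : Fin n → Finset ℕ) :
    ℕ → α × (Fin n → Bool) :=
  fun m => (w m, fun i => decide (m ∈ Xs i))

/-- Annotate a finite word with a set of positions. -/
def encodeList {α : Type} (l : List α) (X : Finset ℕ) : List (α × Bool) :=
  l.zipIdx.map (fun p => (p.1, decide (p.2 ∈ X)))

/-- `UL` : the words `w` such that `w[X] ∈ L` for arbitrarily large finite sets `X`. -/
def UL {α : Type} (L : Set (ℕ → α × Bool)) : Set (ℕ → α) :=
  { w | ∀ n : ℕ, ∃ X : Finset ℕ, n ≤ X.card ∧ withSet w X ∈ L }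

/-- `max(q, l)` : maximal cardinality of a set `X` of positions of `l` such that `A`
reaches state `q` after reading `l[X]` (and `0` if there is no such set). -/
noncomputable def maxReach {α : Type} (A : MaxAutomaton (α × Bool)) (q : A.Q)
    (l : List α) : ℕ :=
  sSup { k | ∃ X : Finset ℕ, (∀ x ∈ X, x < l.length) ∧ X.card = k ∧
    (A.readConfig (encodeList l X)).1 = q }

def suffixFrom {α : Type} (w : ℕ → α) (n : ℕ) : ℕ → α := fun k => w (n + k)

def prefixList {α : Type} (w : ℕ → α) (n : ℕ) : List α := (List.range n).map w

/-! ### WMSO+U and MSO+U formulas -/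

inductive Formula (α : Type) where
  | letter (a : α) (x : ℕ)
  | mem (x X : ℕ)
  | le (x y : ℕ)
  | not (φ : Formula α)
  | and (φ ψ : Formula α)
  | exFO (x : ℕ) (φ : Formula α)
  | exSO (X : ℕ) (φ : Formula α)
  | U (X : ℕ) (φ : Formula α)

/-- Weak semantics: set variables range over finite sets of positions. -/
def Sat {α : Type} (w : ℕ → α) (v1 : ℕ → ℕ) (v2 : ℕ → Finset ℕ) :
    Formula α → Prop
  | .letter a x => w (v1 x) = a
  | .mem x X => v1 x ∈ v2 X
  | .le x y => v1 x ≤ v1 y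
  | .not φ => ¬ Sat w v1 v2 φ
  | .and φ ψ => Sat w v1 v2 φ ∧ Sat w v1 v2 ψ
  | .exFO x φ => ∃ k : ℕ, Sat w (Function.update v1 x k) v2 φ
  | .exSO X φ => ∃ S : Finset ℕ, Sat w v1 (Function.update v2 X S) φ
  | .U X φ => ∀ n : ℕ, ∃ S : Finset ℕ, n ≤ S.card ∧
      Sat w v1 (Function.update v2 X S) φ

/-- Full semantics: set variables range over arbitrary subsets of ℕ; the
unbounding quantifier still speaks about finite sets. -/
def SatFull {α : Type} (w : ℕ → α) (v1 : ℕ → ℕ) (v2 : ℕ → Set ℕ) :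
    Formula α → Prop
  | .letter a x => w (v1 x) = a
  | .mem x X => v1 x ∈ v2 X
  | .le x y => v1 x ≤ v1 y
  | .not φ => ¬ SatFull w v1 v2 φ
  | .and φ ψ => SatFull w v1 v2 φ ∧ SatFull w v1 v2 ψ
  | .exFO x φ => ∃ k : ℕ, SatFull w (Function.update v1 x k) v2 φ
  | .exSO X φ => ∃ S : Set ℕ, SatFull w v1 (Function.update v2 X S) φ
  | .U X φ => ∀ n : ℕ, ∃ S : Finset ℕ, n ≤ S.card ∧
      SatFull w v1 (Function.update v2 X (↑S : Set ℕ)) φ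

def freeFO {α : Type} : Formula α → Finset ℕ
  | .letter _ x => {x}
  | .mem x _ => {x}
  | .le x y => {x, y}
  | .not φ => freeFO φ
  | .and φ ψ => freeFO φ ∪ freeFO ψ
  | .exFO x φ => freeFO φ \ {x}
  | .exSO _ φ => freeFO φ
  | .U _ φ => freeFO φ

def freeSO {α : Type} : Formula α → Finset ℕ
  | .letter _ _ => ∅
  | .mem _ X => {X}
  | .le _ _ => ∅
  | .not φ => freeSO φ
  | .and φ ψ => freeSO φ ∪ freeSO ψ
  | .exFO _ φ => freeSO φ
  | .exSO X φ => freeSO φ \ {X}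
  | .U X φ => freeSO φ \ {X}

def Sentence {α : Type} (φ : Formula α) : Prop :=
  freeFO φ = ∅ ∧ freeSO φ = ∅

/-- `L` is definable by a sentence of WMSO+U. -/
def DefinableW {α : Type} (L : Set (ℕ → α)) : Prop :=
  ∃ φ : Formula α, Sentence φ ∧
    L = { w | Sat w (fun _ => 0) (fun _ => (∅ : Finset ℕ)) φ }

/-- `L` is definable by a sentence of full MSO+U. -/
def DefinableF {α : Type} (L : Set (ℕ → α)) : Prop :=
  ∃ φ : Formula α, Sentence φ ∧
    L = { w | SatFull w (fun _ => 0) (fun _ => (∅ : Set ℕ)) φ }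

/-- `φ` contains no occurrence of the unbounding quantifier. -/
def UFree {α : Type} : Formula α → Prop
  | .letter _ _ => True
  | .mem _ _ => True
  | .le _ _ => True
  | .not φ => UFree φ
  | .and φ ψ => UFree φ ∧ UFree ψ
  | .exFO _ φ => UFree φ
  | .exSO _ φ => UFree φ
  | .U _ _ => False

/-- Boolean combinations of formulas `U X. φ` with `φ` free of the unbounding
quantifier. -/
inductive IsUNormal {α : Type} : Formula α → Prop
  | base (X : ℕ) (φ : Formula α) : UFree φ → IsUNormal (.U X φ)
  | not {φ : Formula α} : IsUNormal φ → IsUNormal (.not φ)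
  | and {φ ψ : Formula α} : IsUNormal φ → IsUNormal ψ →
      IsUNormal (.and φ ψ)

/-! ### Deterministic Muller automata -/

structure MullerAutomaton (α : Type) where
  Q : Type
  [finQ : Fintype Q]
  init : Q
  δ : Q → α → Q
  F : Set (Set Q)

attribute [instance] MullerAutomaton.finQ

namespace MullerAutomaton

variable {α : Type} (M : MullerAutomaton α)

def run (w : ℕ → α) : ℕ → M.Q
  | 0 => M.init
  | n + 1 => M.δ (run w n) (w n)

/-- States occurring infinitely often in the run on `w`. -/
def InfOcc (w : ℕ → α) : Set M.Q :=
  { q | ∀ n : ℕ, ∃ m, n ≤ m ∧ M.run w m = q }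

def Lang : Set (ℕ → α) := { w | M.InfOcc w ∈ M.F }

end MullerAutomaton

/-! ### Partial runs, convergence, spanning sets -/

section PartialRuns

variable {Q α : Type}

/-- State at position `n + k` of the run seeded at configuration `(q, n)`. -/
def runSeed (δ : Q → α → Q) (w : ℕ → α) (q : Q) (n : ℕ) : ℕ → Q
  | 0 => q
  | k + 1 => δ (runSeed δ w q n k) (w (n + k))

/-- The partial run seeded at configuration `(q, n)`. -/
def seeded (δ : Q → α → Q) (w : ℕ → α) (q : Q) (n : ℕ) : ℕ → Option Q :=
  fun m => if _h : n ≤ m then some (runSeed δ w q n (m - n)) else none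

/-- A partial run over `w`: either the nowhere-defined run or a seeded run. -/
def IsPartialRun (δ : Q → α → Q) (w : ℕ → α) (ρ : ℕ → Option Q) : Prop :=
  ρ = (fun _ => none) ∨ ∃ q n, ρ = seeded δ w q n

/-- Two partial runs converge if they agree from some position on. -/
def Converge (ρ₁ ρ₂ : ℕ → Option Q) : Prop :=
  ∃ N : ℕ, ∀ m, N ≤ m → ρ₁ m = ρ₂ m

/-- A set of partial runs spans `w` if every partial run over `w` converges with
some member of the set. -/
def Spans (δ : Q → α → Q) (w : ℕ → α) (S : Set (ℕ → Option Q)) : Prop :=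
  ∀ ρ, IsPartialRun δ w ρ → ∃ ρ' ∈ S, Converge ρ ρ'

end PartialRuns

/-! ### Deterministic letter-to-letter transducers -/

structure Transducer (α β : Type) where
  Q : Type
  [finQ : Fintype Q]
  init : Q
  δ : Q → α → Q
  out : Q → α → β

attribute [instance] Transducer.finQ

namespace Transducer

variable {α β : Type} (T : Transducer α β)

def run (w : ℕ → α) : ℕ → T.Q
  | 0 => T.init
  | n + 1 => T.δ (run w n) (w n)

/-- The function `Σ^ω → Γ^ω` computed by the transducer. -/
def f (w : ℕ → α) : ℕ → β := fun n => T.out (T.run w n) (w n)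

end Transducer

open Classical in
/-- Decode a word over `Q × {0,1}` as a partial run: position `m` is defined (with the
state recorded at `m`) iff all markers from position `m` on are `1`. -/
noncomputable def decode {Q : Type} (u : ℕ → Q × Bool) : ℕ → Option Q :=
  fun m => if (∀ j, m ≤ j → (u j).2 = true) then some (u m).1 else none

/-! ### Guarded max-automata -/

inductive GOp (C α : Type) where
  | inc (c : C)
  | reset (c : C)
  | output (c : C)
  | maxOp (c d : C)
  /-- `if G then output c` : output the value of `c` only if the suffix of the input
  beginning at the next position belongs to `G`. -/
  | goutput (G : Set (ℕ → α)) (c : C)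

open Classical in
noncomputable def applyGOp {C α : Type} [DecidableEq C] (suffix : ℕ → α)
    (v : C → ℕ) : GOp C α → (C → ℕ) × Option (C × ℕ)
  | .inc c => (Function.update v c (v c + 1), none)
  | .reset c => (Function.update v c 0, none)
  | .output c => (v, some (c, v c))
  | .maxOp c d => (Function.update v c (max (v c) (v d)), none)
  | .goutput G c => (v, if suffix ∈ G then some (c, v c) else none)

noncomputable def applyGOps {C α : Type} [DecidableEq C] (suffix : ℕ → α) :
    List (GOp C α) → (C → ℕ) → (C → ℕ) × List (C × ℕ)
  | [], v => (v, [])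
  | op :: ops, v =>
      let p := applyGOp suffix v op
      let r := applyGOps suffix ops p.1
      (r.1, p.2.toList ++ r.2)

def GOp.WF {C α : Type} : GOp C α → Prop
  | .goutput G _ => ∃ A : MaxAutomaton α, A.Lang = G
  | _ => True

structure GuardedMaxAutomaton (α : Type) where
  Q : Type
  C : Type
  [finQ : Fintype Q]
  [finC : Fintype C]
  [decC : DecidableEq C]
  init : Q
  δ : Q → α → Q × List (GOp C α)
  acc : BC C

attribute [instance] GuardedMaxAutomaton.finQ GuardedMaxAutomaton.finC
  GuardedMaxAutomaton.decC

namespace GuardedMaxAutomaton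

variable {α : Type} (B : GuardedMaxAutomaton α)

/-- All guards used by the automaton are languages recognized by deterministic
max-automata. -/
def WF : Prop := ∀ q a, ∀ op ∈ (B.δ q a).2, op.WF

def run (w : ℕ → α) : ℕ → B.Q
  | 0 => B.init
  | n + 1 => (B.δ (run w n) (w n)).1

noncomputable def vals (w : ℕ → α) : ℕ → (B.C → ℕ)
  | 0 => fun _ => 0
  | n + 1 =>
      (applyGOps (suffixFrom w (n + 1)) (B.δ (B.run w n) (w n)).2 (vals w n)).1

noncomputable def outs (w : ℕ → α) (n : ℕ) : List (B.C × ℕ) :=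
  (applyGOps (suffixFrom w (n + 1)) (B.δ (B.run w n) (w n)).2 (B.vals w n)).2

def Bounded (w : ℕ → α) (c : B.C) : Prop :=
  ∃ Bd, ∀ n, ∀ p ∈ B.outs w n, p.1 = c → p.2 ≤ Bd

def Accepts (w : ℕ → α) : Prop := B.acc.eval (B.Bounded w)

def Lang : Set (ℕ → α) := { w | B.Accepts w }

end GuardedMaxAutomaton

/-! ### Nondeterministic max-automata -/

structure NMaxAutomaton (α : Type) where
  Q : Type
  C : Type
  [finQ : Fintype Q]
  [finC : Fintype C]
  [decC : DecidableEq C]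
  init : Q
  δ : Q → α → Set (Q × List (CounterOp C))
  acc : BC C

attribute [instance] NMaxAutomaton.finQ NMaxAutomaton.finC NMaxAutomaton.decC

/-- Counter values along a sequence of counter-operation lists. -/
def nvals {C : Type} [DecidableEq C] (ops : ℕ → List (CounterOp C)) :
    ℕ → (C → ℕ)
  | 0 => fun _ => 0
  | n + 1 => (applyOps (ops n) (nvals ops n)).1

def nouts {C : Type} [DecidableEq C] (ops : ℕ → List (CounterOp C)) (n : ℕ) :
    List (C × ℕ) :=
  (applyOps (ops n) (nvals ops n)).2

namespace NMaxAutomaton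

variable {α : Type} (A : NMaxAutomaton α)

def Accepts (w : ℕ → α) : Prop :=
  ∃ (q : ℕ → A.Q) (ops : ℕ → List (CounterOp A.C)),
    q 0 = A.init ∧
    (∀ n, (q (n + 1), ops n) ∈ A.δ (q n) (w n)) ∧
    A.acc.eval (fun c => ∃ B, ∀ n, ∀ p ∈ nouts ops n, p.1 = c → p.2 ≤ B)

def Lang : Set (ℕ → α) := { w | A.Accepts w }

end NMaxAutomaton

/-! ### The separating language -/

/-- Position of the `k`-th letter `b` in `a^{ns 0} b a^{ns 1} b ⋯` (0-indexed). -/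
def bpos (ns : ℕ → ℕ) (k : ℕ) : ℕ := (∑ i ∈ Finset.range (k + 1), ns i) + k

/-- `L_sep` over the alphabet `{a, b}` (with `a = false`, `b = true`): words
`a^{n₁} b a^{n₂} b ⋯` such that some number appears infinitely often in `n₁, n₂, …`. -/
def Lsep : Set (ℕ → Bool) :=
  { w | ∃ ns : ℕ → ℕ,
      (∀ m, w m = true ↔ ∃ k, bpos ns k = m) ∧
      ∃ v, { i | ns i = v }.Infinite }

/-! ### Topological notions -/

/-- A `Σ₂` set: a countable union of closed sets. -/
def IsSigma2 {X : Type} [TopologicalSpace X] (S : Set X) : Prop :=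
  ∃ F : ℕ → Set X, (∀ n, IsClosed (F n)) ∧ S = ⋃ n, F n

/-- Boolean combinations of `Σ₂` sets. -/
inductive IsBoolCombSigma2 {X : Type} [TopologicalSpace X] : Set X → Prop
  | base {S : Set X} : IsSigma2 S → IsBoolCombSigma2 S
  | compl {S : Set X} : IsBoolCombSigma2 S → IsBoolCombSigma2 Sᶜ
  | inter {S T : Set X} : IsBoolCombSigma2 S → IsBoolCombSigma2 T →
      IsBoolCombSigma2 (S ∩ T)

/-!
For finite `X` the word `w[X]` agrees with `w[∅]` beyond `max X`, and acceptance by a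
max-automaton only depends on a suffix of the run: the first `N` steps output finitely many
values, and changing the initial counter values shifts later outputs by a bounded amount only.
Hence `w[X]` is accepted for some finite `X` iff some run of `A` on `w[∅]`, started at a position
`n` in a state that some annotated prefix of length `n` reaches, is accepting from there on.

The automaton `weakProj A` keeps the set of those reachable states together with `|Q|` slots
holding the runs of `A` on `w[∅]` from all states. When several slots move to the same state only
the one of least index survives, and the others are reassigned to the states left free, so every
state stays held. Each slot runs a copy of the counters of `A` and counts the steps in which it
does not survive and those in which it holds a reachable state. `weakProj A` accepts iff for some
slot the first count is bounded (the slot eventually follows a single run), the second is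
unbounded (that run is the run on some `w[X]`) and the copied counters satisfy the acceptance
condition of `A`.
-/

section Extend

variable {γ δ ε : Type}

theorem extend_extend (e : γ → δ) (g h : γ → ε) (v : δ → ε) :
    Function.extend e h (Function.extend e g v) = Function.extend e h v := by
  classical
  funext d
  simp only [Function.extend_def]
  split_ifs <;> rfl

theorem extend_comp_self {e : γ → δ} (he : e.Injective) (v : δ → ε) :
    Function.extend e (v ∘ e) v = v := by
  funext d
  by_cases hd : ∃ c, e c = d
  · obtain ⟨c, rfl⟩ := hd
    exact he.extend_apply _ _ c
  · exact Function.extend_apply' _ _ _ hd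

theorem update_eq_extend [DecidableEq γ] [DecidableEq δ] {e : γ → δ} (he : e.Injective)
    (v : δ → ε) (c : γ) (x : ε) :
    Function.update v (e c) x = Function.extend e (Function.update (v ∘ e) c x) v := by
  funext d
  by_cases hd : ∃ c', e c' = d
  · obtain ⟨c', rfl⟩ := hd
    simp [he.extend_apply, Function.update_apply, he.eq_iff]
  · rw [Function.extend_apply' _ _ _ hd, Function.update_of_ne]
    exact fun h => hd ⟨c, h.symm⟩

end Extend

section CounterOps

variable {γ δ ι : Type}

def CounterOp.rename (e : γ → δ) : CounterOp γ → CounterOp δ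
  | .inc c => .inc (e c)
  | .reset c => .reset (e c)
  | .output c => .output (e c)
  | .maxOp c d => .maxOp (e c) (e d)

variable [DecidableEq γ] [DecidableEq δ] [DecidableEq ι]

theorem applyOps_append (l₁ l₂ : List (CounterOp γ)) (v : γ → ℕ) :
    applyOps (l₁ ++ l₂) v =
      ((applyOps l₂ (applyOps l₁ v).1).1,
        (applyOps l₁ v).2 ++ (applyOps l₂ (applyOps l₁ v).1).2) := by
  induction l₁ generalizing v with
  | nil => simp [applyOps]
  | cons op l ih => simp [applyOps, ih]

theorem applyOp_rename {e : γ → δ} (he : e.Injective) (op : CounterOp γ) (v : δ → ℕ) :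
    applyOp v (op.rename e) =
      (Function.extend e (applyOp (v ∘ e) op).1 v,
        (applyOp (v ∘ e) op).2.map (Prod.map e id)) := by
  cases op <;> simp [CounterOp.rename, applyOp, update_eq_extend he, extend_comp_self he]

theorem applyOps_rename {e : γ → δ} (he : e.Injective) (l : List (CounterOp γ)) (v : δ → ℕ) :
    applyOps (l.map (CounterOp.rename e)) v =
      (Function.extend e (applyOps l (v ∘ e)).1 v,
        (applyOps l (v ∘ e)).2.map (Prod.map e id)) := by
  induction l generalizing v with
  | nil => simp [applyOps, extend_comp_self he]
  | cons op l ih =>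
    simp only [List.map_cons, applyOps, ih, applyOp_rename he, Function.extend_comp he,
      extend_extend, List.map_append]
    cases (applyOp (v ∘ e) op).2 <;> rfl

def sumOps (l₁ : List (CounterOp γ)) (l₂ : List (CounterOp δ)) : List (CounterOp (γ ⊕ δ)) :=
  l₁.map (CounterOp.rename Sum.inl) ++ l₂.map (CounterOp.rename Sum.inr)

theorem applyOps_sumOps (l₁ : List (CounterOp γ)) (l₂ : List (CounterOp δ)) (v : γ ⊕ δ → ℕ) :
    applyOps (sumOps l₁ l₂) v =
      (Sum.elim (applyOps l₁ (v ∘ Sum.inl)).1 (applyOps l₂ (v ∘ Sum.inr)).1,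
        (applyOps l₁ (v ∘ Sum.inl)).2.map (Prod.map Sum.inl id) ++
          (applyOps l₂ (v ∘ Sum.inr)).2.map (Prod.map Sum.inr id)) := by
  have hinr : Function.extend Sum.inl (applyOps l₁ (v ∘ Sum.inl)).1 v ∘ Sum.inr = v ∘ Sum.inr :=
    funext fun d => Function.extend_apply' _ _ _ (by simp)
  rw [sumOps, applyOps_append, applyOps_rename Sum.inl_injective,
    applyOps_rename Sum.inr_injective, hinr]
  refine Prod.ext (funext fun c => ?_) rfl
  cases c <;> simp [Sum.inl_injective.extend_apply, Sum.inr_injective.extend_apply,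
    Function.extend_apply']

theorem applyOps_flatMap_rename_prodMk (l : ι → List (CounterOp γ)) (J : List ι) (hJ : J.Nodup)
    (v : ι × γ → ℕ) :
    applyOps (J.flatMap fun i => (l i).map (CounterOp.rename (Prod.mk i))) v =
      (fun p => if p.1 ∈ J then (applyOps (l p.1) (v ∘ Prod.mk p.1)).1 p.2 else v p,
        J.flatMap fun i => (applyOps (l i) (v ∘ Prod.mk i)).2.map (Prod.map (Prod.mk i) id)) := by
  induction J generalizing v with
  | nil => simp [applyOps]
  | cons j J ih =>
    obtain ⟨hjJ, hJ⟩ := List.nodup_cons.1 hJ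
    have hv' : ∀ i, i ≠ j →
        Function.extend (Prod.mk j) (applyOps (l j) (v ∘ Prod.mk j)).1 v ∘ Prod.mk i =
          v ∘ Prod.mk i := fun i hij =>
      funext fun c => Function.extend_apply' _ _ _ (by simp [Ne.symm hij])
    rw [List.flatMap_cons, applyOps_append, applyOps_rename (Prod.mk_right_injective j), ih hJ]
    refine Prod.ext (funext fun ⟨i, c⟩ => ?_) ?_
    · by_cases hij : i = j
      · subst hij
        simp [hjJ, (Prod.mk_right_injective i).extend_apply]
      · simp only [List.mem_cons, hij, false_or]
        split_ifs
        · rw [hv' i hij]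
        · exact Function.extend_apply' _ _ _ (by simp [Ne.symm hij])
    · simp only [List.flatMap_cons]
      congr 1
      refine List.flatMap_congr fun i hi => ?_
      rw [hv' i (fun h => hjJ (h ▸ hi))]

noncomputable def blockOps [Fintype ι] (l : ι → List (CounterOp γ)) : List (CounterOp (ι × γ)) :=
  Finset.univ.toList.flatMap fun i => (l i).map (CounterOp.rename (Prod.mk i))

theorem applyOps_blockOps [Fintype ι] (l : ι → List (CounterOp γ)) (v : ι × γ → ℕ) :
    applyOps (blockOps l) v =
      (fun p => (applyOps (l p.1) (v ∘ Prod.mk p.1)).1 p.2,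
        Finset.univ.toList.flatMap fun i =>
          (applyOps (l i) (v ∘ Prod.mk i)).2.map (Prod.map (Prod.mk i) id)) := by
  simp [blockOps, applyOps_flatMap_rename_prodMk l _ (Finset.nodup_toList _)]

def tickOps (b : Bool) : List (CounterOp Unit) := (if b then [.inc ()] else []) ++ [.output ()]

theorem applyOps_tickOps (b : Bool) (v : Unit → ℕ) :
    applyOps (tickOps b) v = (fun _ => v () + b.toNat, [((), v () + b.toNat)]) := by
  cases b
  · simp [tickOps, applyOps, applyOp]
  · simp [tickOps, applyOps, applyOp, Function.update_eq_const_of_subsingleton]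
    rfl

theorem applyOp_le_add {v v' : γ → ℕ} {M : ℕ} (h : ∀ c, v' c ≤ v c + M) (op : CounterOp γ) :
    (∀ c, (applyOp v' op).1 c ≤ (applyOp v op).1 c + M) ∧
      ∀ c x, (c, x) ∈ (applyOp v' op).2 → ∃ y, (c, y) ∈ (applyOp v op).2 ∧ x ≤ y + M := by
  cases op with
  | output c => simpa [applyOp] using ⟨h, h c⟩
  | inc c =>
    refine ⟨fun d => ?_, by simp [applyOp]⟩
    rcases eq_or_ne d c with rfl | hd
    · simp only [applyOp, Function.update_self]; have := h d; omega
    · simpa [applyOp, hd] using h d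
  | reset c =>
    refine ⟨fun d => ?_, by simp [applyOp]⟩
    rcases eq_or_ne d c with rfl | hd
    · simp [applyOp]
    · simpa [applyOp, hd] using h d
  | maxOp c d =>
    refine ⟨fun e => ?_, by simp [applyOp]⟩
    rcases eq_or_ne e c with rfl | he
    · simp only [applyOp, Function.update_self]; have := h e; have := h d; omega
    · simpa [applyOp, he] using h e

theorem applyOps_le_add {v v' : γ → ℕ} {M : ℕ} (h : ∀ c, v' c ≤ v c + M) (l : List (CounterOp γ)) :
    (∀ c, (applyOps l v').1 c ≤ (applyOps l v).1 c + M) ∧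
      ∀ c x, (c, x) ∈ (applyOps l v').2 → ∃ y, (c, y) ∈ (applyOps l v).2 ∧ x ≤ y + M := by
  induction l generalizing v v' with
  | nil => simpa [applyOps] using h
  | cons op l ih =>
    obtain ⟨hv, hout⟩ := applyOp_le_add h op
    obtain ⟨hv', hout'⟩ := ih hv
    refine ⟨hv', fun c x hx => ?_⟩
    rcases List.mem_append.1 hx with hx | hx
    · obtain ⟨y, hy, hxy⟩ := hout c x (Option.mem_toList.1 hx)
      exact ⟨y, List.mem_append_left _ (Option.mem_toList.2 hy), hxy⟩
    · obtain ⟨y, hy, hxy⟩ := hout' c x hx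
      exact ⟨y, List.mem_append_right _ hy, hxy⟩

end CounterOps

section CounterSequences

variable {γ δ ι : Type} [DecidableEq γ] [DecidableEq δ] [DecidableEq ι]

def valsAlong (v : γ → ℕ) (ops : ℕ → List (CounterOp γ)) : ℕ → γ → ℕ
  | 0 => v
  | n + 1 => (applyOps (ops n) (valsAlong v ops n)).1

def outputsAlong (v : γ → ℕ) (ops : ℕ → List (CounterOp γ)) (c : γ) : Set ℕ :=
  {x | ∃ n, (c, x) ∈ (applyOps (ops n) (valsAlong v ops n)).2}

theorem valsAlong_le_add {v v' : γ → ℕ} {M : ℕ} (h : ∀ c, v' c ≤ v c + M)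
    (ops : ℕ → List (CounterOp γ)) (n : ℕ) (c : γ) :
    valsAlong v' ops n c ≤ valsAlong v ops n c + M := by
  induction n generalizing c with
  | zero => exact h c
  | succ n ih => exact (applyOps_le_add ih (ops n)).1 c

theorem bddAbove_outputsAlong_of_le_add {v v' : γ → ℕ} {M : ℕ} (h : ∀ c, v' c ≤ v c + M)
    {ops : ℕ → List (CounterOp γ)} {c : γ} (hb : BddAbove (outputsAlong v ops c)) :
    BddAbove (outputsAlong v' ops c) := by
  obtain ⟨B, hB⟩ := hb
  refine ⟨B + M, fun x ⟨n, hx⟩ => ?_⟩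
  obtain ⟨y, hy, hxy⟩ := (applyOps_le_add (valsAlong_le_add h ops n) (ops n)).2 c x hx
  have := hB ⟨n, hy⟩
  omega

theorem bddAbove_outputsAlong_congr [Fintype γ] (v v' : γ → ℕ) (ops : ℕ → List (CounterOp γ))
    (c : γ) : BddAbove (outputsAlong v ops c) ↔ BddAbove (outputsAlong v' ops c) :=
  have le_sup (u u' : γ → ℕ) (d : γ) : u' d ≤ u d + Finset.univ.sup u' :=
    (Finset.le_sup (Finset.mem_univ d)).trans (Nat.le_add_left _ _)
  ⟨bddAbove_outputsAlong_of_le_add (le_sup v v'), bddAbove_outputsAlong_of_le_add (le_sup v' v)⟩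

theorem valsAlong_add (v : γ → ℕ) (ops : ℕ → List (CounterOp γ)) (N k : ℕ) :
    valsAlong v ops (N + k) = valsAlong (valsAlong v ops N) (fun k => ops (N + k)) k := by
  induction k with
  | zero => rfl
  | succ k ih =>
    show (applyOps (ops (N + k)) (valsAlong v ops (N + k))).1 = _
    rw [ih]
    rfl

theorem outputsAlong_eq_union (v : γ → ℕ) (ops : ℕ → List (CounterOp γ)) (c : γ) (N : ℕ) :
    outputsAlong v ops c =
      (⋃ n ∈ Finset.range N, {x | (c, x) ∈ (applyOps (ops n) (valsAlong v ops n)).2}) ∪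
        outputsAlong (valsAlong v ops N) (fun k => ops (N + k)) c := by
  ext x
  simp only [outputsAlong, Set.mem_union, Set.mem_iUnion, Set.mem_ofPred_eq, Finset.mem_range,
    ← valsAlong_add]
  constructor
  · rintro ⟨n, hn⟩
    by_cases hnN : n < N
    · exact .inl ⟨n, hnN, hn⟩
    · obtain ⟨k, rfl⟩ := Nat.exists_eq_add_of_le (not_lt.1 hnN)
      exact .inr ⟨k, hn⟩
  · rintro (⟨n, -, hn⟩ | ⟨k, hk⟩)
    exacts [⟨n, hn⟩, ⟨N + k, hk⟩]

theorem bddAbove_outputsAlong_shift [Fintype γ] (v : γ → ℕ) (ops : ℕ → List (CounterOp γ))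
    (c : γ) (N : ℕ) :
    BddAbove (outputsAlong v ops c) ↔ BddAbove (outputsAlong v (fun k => ops (N + k)) c) := by
  have hfin : (⋃ n ∈ Finset.range N,
      {x | (c, x) ∈ (applyOps (ops n) (valsAlong v ops n)).2}).Finite :=
    (Finset.range N).finite_toSet.biUnion fun n _ =>
      ((applyOps (ops n) (valsAlong v ops n)).2.finite_toSet.image Prod.snd).subset
        fun x hx => ⟨(c, x), hx, rfl⟩
  rw [outputsAlong_eq_union v ops c N, bddAbove_union, and_iff_right hfin.bddAbove,
    bddAbove_outputsAlong_congr]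

theorem valsAlong_sumOps (v : γ ⊕ δ → ℕ) (l₁ : ℕ → List (CounterOp γ))
    (l₂ : ℕ → List (CounterOp δ)) (n : ℕ) :
    valsAlong v (fun n => sumOps (l₁ n) (l₂ n)) n =
      Sum.elim (valsAlong (v ∘ Sum.inl) l₁ n) (valsAlong (v ∘ Sum.inr) l₂ n) := by
  induction n with
  | zero => exact (Sum.elim_comp_inl_inr v).symm
  | succ n ih =>
    simp only [valsAlong, ih, applyOps_sumOps, Sum.elim_comp_inl, Sum.elim_comp_inr]

theorem outputsAlong_sumOps_inl (v : γ ⊕ δ → ℕ) (l₁ : ℕ → List (CounterOp γ))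
    (l₂ : ℕ → List (CounterOp δ)) (c : γ) :
    outputsAlong v (fun n => sumOps (l₁ n) (l₂ n)) (Sum.inl c) =
      outputsAlong (v ∘ Sum.inl) l₁ c := by
  ext x
  simp [outputsAlong, applyOps_sumOps, valsAlong_sumOps]

theorem outputsAlong_sumOps_inr (v : γ ⊕ δ → ℕ) (l₁ : ℕ → List (CounterOp γ))
    (l₂ : ℕ → List (CounterOp δ)) (d : δ) :
    outputsAlong v (fun n => sumOps (l₁ n) (l₂ n)) (Sum.inr d) =
      outputsAlong (v ∘ Sum.inr) l₂ d := by
  ext x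
  simp [outputsAlong, applyOps_sumOps, valsAlong_sumOps]

theorem valsAlong_blockOps [Fintype ι] (v : ι × γ → ℕ) (l : ι → ℕ → List (CounterOp γ)) (n : ℕ) :
    valsAlong v (fun n => blockOps (l · n)) n =
      fun p => valsAlong (v ∘ Prod.mk p.1) (l p.1) n p.2 := by
  induction n with
  | zero => rfl
  | succ n ih =>
    simp only [valsAlong, ih, applyOps_blockOps]
    rfl

theorem outputsAlong_blockOps [Fintype ι] (v : ι × γ → ℕ) (l : ι → ℕ → List (CounterOp γ))
    (i : ι) (c : γ) :
    outputsAlong v (fun n => blockOps (l · n)) (i, c) = outputsAlong (v ∘ Prod.mk i) (l i) c := by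
  ext x
  simp [outputsAlong, applyOps_blockOps, valsAlong_blockOps, Function.comp_def]

theorem valsAlong_tickOps (v : Unit → ℕ) (t : ℕ → Bool) (n : ℕ) :
    valsAlong v (fun n => tickOps (t n)) n () = v () + Nat.count (fun m => t m) n := by
  induction n with
  | zero => simp [valsAlong]
  | succ n ih =>
    rw [valsAlong, applyOps_tickOps, ih, Nat.count_succ]
    cases t n <;> simp [Nat.add_assoc]

theorem outputsAlong_tickOps (v : Unit → ℕ) (t : ℕ → Bool) :
    outputsAlong v (fun n => tickOps (t n)) () =
      Set.range fun n => v () + Nat.count (fun m => t m) (n + 1) := by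
  ext x
  simp only [outputsAlong, Set.mem_ofPred_eq, applyOps_tickOps, valsAlong_tickOps,
    List.mem_singleton, Prod.mk.injEq, true_and, Set.mem_range]
  refine exists_congr fun n => ?_
  rw [Nat.count_succ]
  cases t n <;> simp only [Bool.false_eq_true, if_false, if_true, Bool.toNat_false,
    Bool.toNat_true] <;> omega

theorem bddAbove_outputsAlong_tickOps_iff (v : Unit → ℕ) (t : ℕ → Bool) :
    BddAbove (outputsAlong v (fun n => tickOps (t n)) ()) ↔ {m | t m}.Finite := by
  rw [outputsAlong_tickOps]
  constructor
  · intro ⟨B, hB⟩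
    by_contra hinf
    set m := Nat.nth (fun m => t m) (B + 1)
    have hm : B + 1 ≤ Nat.count (fun m => t m) (m + 1) :=
      Nat.count_nth_of_infinite hinf (B + 1) ▸ Nat.count_monotone _ (Nat.le_add_right m 1)
    have : v () + Nat.count (fun m => t m) (m + 1) ≤ B := hB ⟨m, rfl⟩
    omega
  · intro hfin
    exact ⟨v () + hfin.toFinset.card, by
      rintro _ ⟨n, rfl⟩
      exact Nat.add_le_add_left (Nat.count_le_card hfin _) _⟩

end CounterSequences

namespace BC

variable {σ τ : Type}

def map (f : σ → τ) : BC σ → BC τ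
  | .tt => .tt
  | .atom a => .atom (f a)
  | .nt φ => .nt (map f φ)
  | .an φ ψ => .an (map f φ) (map f ψ)

theorem eval_map (f : σ → τ) (g : τ → Prop) (φ : BC σ) : (φ.map f).eval g = φ.eval (g ∘ f) := by
  induction φ with
  | tt | atom => rfl
  | nt φ ih => simp only [map, eval, ih]
  | an φ ψ ihφ ihψ => simp only [map, eval, ihφ, ihψ]

def or (φ ψ : BC σ) : BC σ := .nt (.an (.nt φ) (.nt ψ))

def any : List (BC σ) → BC σ
  | [] => .nt .tt
  | φ :: l => or φ (any l)

theorem eval_any (f : σ → Prop) (l : List (BC σ)) : (any l).eval f ↔ ∃ φ ∈ l, φ.eval f := by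
  induction l with
  | nil => simp [any, eval]
  | cons φ l ih => simp only [any, or, eval, ih, List.mem_cons]; grind

end BC

namespace MaxAutomaton

variable {α : Type} (A : MaxAutomaton α)

def opsAlong (q : A.Q) (w : ℕ → α) (n : ℕ) : List (CounterOp A.C) :=
  (A.δ (A.runFrom q w n) (w n)).2

theorem valsFrom_eq_valsAlong (q : A.Q) (w : ℕ → α) (n : ℕ) :
    A.valsFrom q w n = valsAlong (fun _ => 0) (A.opsAlong q w) n := by
  induction n with
  | zero => rfl
  | succ n ih => simp only [valsFrom, valsAlong, ih, opsAlong]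

theorem boundedFrom_iff (q : A.Q) (w : ℕ → α) (c : A.C) :
    A.BoundedFrom q w c ↔ BddAbove (outputsAlong (fun _ => 0) (A.opsAlong q w) c) := by
  simp only [BoundedFrom, outsFrom, valsFrom_eq_valsAlong, BddAbove, upperBounds, outputsAlong,
    Set.Nonempty, Set.mem_ofPred_eq, forall_exists_index]
  constructor
  · rintro ⟨B, hB⟩
    exact ⟨B, fun x n hx => hB n _ hx rfl⟩
  · rintro ⟨B, hB⟩
    exact ⟨B, fun n p hp hc => hB n (hc ▸ hp)⟩

theorem runFrom_add (q : A.Q) (w : ℕ → α) (N k : ℕ) :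
    A.runFrom q w (N + k) = A.runFrom (A.runFrom q w N) (suffixFrom w N) k := by
  induction k with
  | zero => rfl
  | succ k ih =>
    show (A.δ (A.runFrom q w (N + k)) (w (N + k))).1 = _
    rw [ih]
    rfl

theorem acceptsFrom_iff_suffixFrom (q : A.Q) (w : ℕ → α) (N : ℕ) :
    A.AcceptsFrom q w ↔ A.AcceptsFrom (A.runFrom q w N) (suffixFrom w N) := by
  have hops : (fun k => A.opsAlong q w (N + k)) = A.opsAlong (A.runFrom q w N) (suffixFrom w N) :=
    funext fun k => by simp only [opsAlong, runFrom_add, suffixFrom]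
  have hbd : A.BoundedFrom q w = A.BoundedFrom (A.runFrom q w N) (suffixFrom w N) :=
    funext fun c => propext <| by
      rw [boundedFrom_iff, boundedFrom_iff, bddAbove_outputsAlong_shift _ _ _ N, hops]
  rw [AcceptsFrom, AcceptsFrom, hbd]

theorem runFrom_congr (q : A.Q) {w₁ w₂ : ℕ → α} {n : ℕ} (h : ∀ m < n, w₁ m = w₂ m) :
    A.runFrom q w₁ n = A.runFrom q w₂ n := by
  induction n with
  | zero => rfl
  | succ n ih => simp only [runFrom, ih fun m hm => h m (by omega), h n (by omega)]

end MaxAutomaton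

section Slots

variable {Q β : Type}

def Survives {k : ℕ} (f : Q → Q) (σ : Fin k → Q) (i : Fin k) : Prop :=
  ∀ j < i, f (σ j) ≠ f (σ i)

theorem exists_survivor_le {k : ℕ} (f : Q → Q) (σ : Fin k → Q) (i : Fin k) :
    ∃ j ≤ i, Survives f σ j ∧ f (σ j) = f (σ i) ∧ (¬ Survives f σ i → j < i) := by
  obtain ⟨j, hj, hmin⟩ := wellFounded_lt.has_min {j | f (σ j) = f (σ i)} ⟨i, rfl⟩
  refine ⟨j, not_lt.1 (hmin i rfl), fun l hl hlj => hmin l (hlj.trans hj) hl, hj, fun hi => ?_⟩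
  obtain ⟨l, hli, hl⟩ : ∃ l < i, f (σ l) = f (σ i) := by
    simpa [Survives] using hi
  exact lt_of_not_ge fun hij => hmin l hl (hli.trans_le hij)

variable [Fintype Q]

theorem exists_slotStep (f : Q → Q) (σ : Fin (Fintype.card Q) → Q) :
    ∃ σ' : Fin (Fintype.card Q) → Q, σ'.Surjective ∧ ∀ i, Survives f σ i → σ' i = f (σ i) := by
  have hinj : Set.InjOn (f ∘ σ) {i | Survives f σ i} := fun i hi j hj hij => by
    by_contra hne
    rcases lt_or_gt_of_ne hne with h | h
    exacts [hj i h hij, hi j h hij.symm]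
  obtain ⟨g, hg⟩ := Set.MapsTo.exists_equiv_extend_of_card_eq (t := Finset.univ)
    (by simp) (fun _ _ => Finset.mem_coe.2 (Finset.mem_univ _)) hinj
  exact ⟨fun i => g i, fun q => ⟨g.symm ⟨q, Finset.mem_univ q⟩, by simp⟩, hg⟩

noncomputable def slotStep (f : Q → Q) (σ : Fin (Fintype.card Q) → Q) :
    Fin (Fintype.card Q) → Q :=
  Classical.choose (exists_slotStep f σ)

theorem slotStep_surjective (f : Q → Q) (σ : Fin (Fintype.card Q) → Q) :
    (slotStep f σ).Surjective :=
  (Classical.choose_spec (exists_slotStep f σ)).1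

theorem slotStep_of_survives {f : Q → Q} {σ : Fin (Fintype.card Q) → Q} {i : Fin (Fintype.card Q)}
    (h : Survives f σ i) : slotStep f σ i = f (σ i) :=
  (Classical.choose_spec (exists_slotStep f σ)).2 i h

noncomputable def slots (δ : Q → β → Q) (w : ℕ → β) : ℕ → Fin (Fintype.card Q) → Q
  | 0 => (Fintype.equivFin Q).symm
  | n + 1 => slotStep (δ · (w n)) (slots δ w n)

variable (δ : Q → β → Q) (w : ℕ → β)

theorem slots_surjective (n : ℕ) : (slots δ w n).Surjective := by
  cases n with
  | zero => exact (Fintype.equivFin Q).symm.surjective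
  | succ n => exact slotStep_surjective _ _

theorem slots_add_of_survives {M : ℕ} {i : Fin (Fintype.card Q)}
    (h : ∀ m, M ≤ m → Survives (δ · (w m)) (slots δ w m) i) (k : ℕ) :
    slots δ w (M + k) i = runSeed δ w (slots δ w M i) M k := by
  induction k with
  | zero => rfl
  | succ k ih =>
    rw [← Nat.add_assoc, slots, slotStep_of_survives (h _ (Nat.le_add_right M k)), ih]
    rfl

/-- The least slot holding the run never increases, and decreases whenever it does not
survive. -/
theorem exists_slot_survives_forever (N : ℕ) (q : Q) :
    ∃ K i, (∀ m, N + K ≤ m → Survives (δ · (w m)) (slots δ w m) i) ∧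
      slots δ w (N + K) i = runSeed δ w q N K := by
  have hne : ∀ k, {i | slots δ w (N + k) i = runSeed δ w q N k}.Nonempty :=
    fun k => slots_surjective δ w (N + k) _
  let g k := wellFounded_lt.min _ (hne k)
  have hg_mem : ∀ k, slots δ w (N + k) (g k) = runSeed δ w q N k :=
    fun k => wellFounded_lt.min_mem _ (hne k)
  have hg_le : ∀ k i, slots δ w (N + k) i = runSeed δ w q N k → g k ≤ i := fun k i hi =>
    not_lt.1 (wellFounded_lt.not_lt_min {i | slots δ w (N + k) i = runSeed δ w q N k} hi)
  have hstep : ∀ k, g (k + 1) ≤ g k ∧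
      (¬ Survives (δ · (w (N + k))) (slots δ w (N + k)) (g k) → g (k + 1) < g k) := by
    intro k
    obtain ⟨j, hj, hsurv, hjeq, hlt⟩ :=
      exists_survivor_le (δ · (w (N + k))) (slots δ w (N + k)) (g k)
    have hgj : g (k + 1) ≤ j := hg_le (k + 1) j <| by
      rw [← Nat.add_assoc, slots, slotStep_of_survives hsurv, hjeq, hg_mem]
      rfl
    exact ⟨hgj.trans hj, fun h => hgj.trans_lt (hlt h)⟩
  obtain ⟨_, ⟨K, rfl⟩, hK⟩ := wellFounded_lt.has_min (Set.range g) ⟨g 0, 0, rfl⟩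
  have hconst : ∀ k, g (K + k) = g K := by
    intro k
    induction k with
    | zero => rfl
    | succ k ih => exact le_antisymm (ih ▸ (hstep _).1) (not_lt.1 (hK _ ⟨_, rfl⟩))
  refine ⟨K, g K, fun m hm => ?_, hg_mem K⟩
  obtain ⟨k, rfl⟩ := Nat.exists_eq_add_of_le hm
  by_contra hdead
  rw [Nat.add_assoc, ← hconst k] at hdead
  exact hK _ ⟨K + k + 1, rfl⟩ (hconst k ▸ (hstep (K + k)).2 hdead)

end Slots

theorem suffixFrom_withSet_of_lt {α : Type} (w : ℕ → α) {X : Finset ℕ} {N : ℕ}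
    (hX : ∀ x ∈ X, x < N) : suffixFrom (withSet w X) N = suffixFrom (withSet w ∅) N := by
  funext k
  have : N + k ∉ X := fun h => by have := hX _ h; omega
  simp [suffixFrom, withSet, this]

namespace MaxAutomaton

variable {α : Type} (A : MaxAutomaton (α × Bool))

def falseStep (q : A.Q) (a : α) : A.Q := (A.δ q (a, false)).1

theorem runFrom_suffixFrom_withSet_empty (q : A.Q) (w : ℕ → α) (M k : ℕ) :
    A.runFrom q (suffixFrom (withSet w ∅) M) k = runSeed A.falseStep w q M k := by
  induction k with
  | zero => rfl
  | succ k ih => simp [runFrom, runSeed, ih, falseStep, suffixFrom, withSet]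

theorem runFrom_withSet_congr (w : ℕ → α) {X Y : Finset ℕ} {n : ℕ}
    (h : ∀ m < n, m ∈ X ↔ m ∈ Y) :
    A.runFrom A.init (withSet w X) n = A.runFrom A.init (withSet w Y) n :=
  A.runFrom_congr _ fun m hm => by simp [withSet, h m hm]

def reachable (w : ℕ → α) (n : ℕ) : Set A.Q :=
  {q | ∃ X : Finset ℕ, (∀ x ∈ X, x < n) ∧ A.runFrom A.init (withSet w X) n = q}

def reachStep (R : Set A.Q) (a : α) : Set A.Q :=
  {q' | ∃ q ∈ R, ∃ b, (A.δ q (a, b)).1 = q'}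

theorem reachable_zero (w : ℕ → α) : A.reachable w 0 = {A.init} := by
  ext q
  constructor
  · rintro ⟨X, -, rfl⟩
    rfl
  · rintro rfl
    exact ⟨∅, by simp, rfl⟩

theorem reachable_succ (w : ℕ → α) (n : ℕ) :
    A.reachable w (n + 1) = A.reachStep (A.reachable w n) (w n) := by
  ext q'
  constructor
  · rintro ⟨X, -, rfl⟩
    refine ⟨_, ⟨X.filter (· < n), fun x hx => (Finset.mem_filter.1 hx).2, rfl⟩, decide (n ∈ X), ?_⟩
    rw [A.runFrom_withSet_congr w (X := X.filter (· < n)) (Y := X) fun m hm => by simp [hm]]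
    rfl
  · rintro ⟨q, ⟨X, hX, rfl⟩, b, rfl⟩
    have hnX : n ∉ X := fun h => (hX n h).false
    refine ⟨if b then insert n X else X, fun x hx => ?_, ?_⟩
    · split_ifs at hx
      · rcases Finset.mem_insert.1 hx with rfl | hx
        exacts [Nat.lt_succ_self x, (hX x hx).trans (Nat.lt_succ_self n)]
      · exact (hX x hx).trans (Nat.lt_succ_self n)
    · show (A.δ _ (withSet w _ n)).1 = _
      rw [A.runFrom_withSet_congr w (Y := X) fun m hm => by split_ifs <;> simp [hm.ne]]
      cases b <;> simp [withSet, hnX]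

open Classical in
/-- The counters of slot `i`: `inl c` copies the counter `c` of `A` and is operated only while
the slot survives; `inr (inl ())` counts the steps in which the slot does not survive and
`inr (inr ())` those in which it holds a state of `R`. -/
noncomputable def slotOps (σ : Fin (Fintype.card A.Q) → A.Q) (R : Set A.Q) (a : α)
    (i : Fin (Fintype.card A.Q)) : List (CounterOp (A.C ⊕ Unit ⊕ Unit)) :=
  sumOps (if Survives (A.falseStep · a) σ i then (A.δ (σ i) (a, false)).2 else [])
    (sumOps (tickOps (decide ¬ Survives (A.falseStep · a) σ i)) (tickOps (decide (σ i ∈ R))))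

noncomputable def weakProj : MaxAutomaton α where
  Q := (Fin (Fintype.card A.Q) → A.Q) × Set A.Q
  C := Fin (Fintype.card A.Q) × (A.C ⊕ Unit ⊕ Unit)
  finQ := Fintype.ofFinite _
  init := ((Fintype.equivFin A.Q).symm, {A.init})
  δ s a := ((slotStep (A.falseStep · a) s.1, A.reachStep s.2 a), blockOps (A.slotOps s.1 s.2 a))
  acc := BC.any <| Finset.univ.toList.map fun i =>
    .an (A.acc.map fun c => (i, .inl c))
      (.an (.atom (i, .inr (.inl ()))) (.nt (.atom (i, .inr (.inr ())))))

open Filter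

variable (w : ℕ → α)

theorem weakProj_runFrom (n : ℕ) :
    A.weakProj.runFrom A.weakProj.init w n = (slots A.falseStep w n, A.reachable w n) := by
  induction n with
  | zero => exact Prod.ext rfl (A.reachable_zero w).symm
  | succ n ih =>
    rw [runFrom, ih, reachable_succ]
    rfl

theorem weakProj_outputsAlong (i : Fin (Fintype.card A.Q)) (c : A.C ⊕ Unit ⊕ Unit) :
    outputsAlong (fun _ => 0) (A.weakProj.opsAlong A.weakProj.init w) (i, c) =
      outputsAlong (fun _ => 0)
        (fun n => A.slotOps (slots A.falseStep w n) (A.reachable w n) (w n) i) c := by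
  let l j n := A.slotOps (slots A.falseStep w n) (A.reachable w n) (w n) j
  have hops : A.weakProj.opsAlong A.weakProj.init w = fun n => blockOps (l · n) :=
    funext fun n => by rw [opsAlong, weakProj_runFrom]; rfl
  rw [hops]
  exact outputsAlong_blockOps _ l i c

theorem weakProj_boundedFrom_inl {M : ℕ} {i : Fin (Fintype.card A.Q)}
    (hM : ∀ m, M ≤ m → Survives (A.falseStep · (w m)) (slots A.falseStep w m) i) (c : A.C) :
    A.weakProj.BoundedFrom A.weakProj.init w (i, .inl c) ↔
      A.BoundedFrom (slots A.falseStep w M i) (suffixFrom (withSet w ∅) M) c := by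
  refine (A.weakProj.boundedFrom_iff _ _ _).trans ?_
  rw [boundedFrom_iff, weakProj_outputsAlong]
  simp only [slotOps]
  rw [outputsAlong_sumOps_inl, bddAbove_outputsAlong_shift _ _ _ M]
  congr! 2
  funext k
  rw [if_pos (hM _ (Nat.le_add_right M k)), opsAlong, runFrom_suffixFrom_withSet_empty,
    ← slots_add_of_survives _ _ hM]
  simp [suffixFrom, withSet]

theorem weakProj_boundedFrom_deaths_iff (i : Fin (Fintype.card A.Q)) :
    A.weakProj.BoundedFrom A.weakProj.init w (i, .inr (.inl ())) ↔
      ∀ᶠ m in atTop, Survives (A.falseStep · (w m)) (slots A.falseStep w m) i := by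
  refine (A.weakProj.boundedFrom_iff _ _ _).trans ?_
  rw [weakProj_outputsAlong]
  simp only [slotOps]
  rw [outputsAlong_sumOps_inr, outputsAlong_sumOps_inl, bddAbove_outputsAlong_tickOps_iff,
    ← Nat.cofinite_eq_atTop, eventually_cofinite]
  simp

theorem weakProj_not_boundedFrom_visits_iff (i : Fin (Fintype.card A.Q)) :
    ¬ A.weakProj.BoundedFrom A.weakProj.init w (i, .inr (.inr ())) ↔
      ∃ᶠ m in atTop, slots A.falseStep w m i ∈ A.reachable w m := by
  rw [not_iff_comm, not_frequently]
  refine ((A.weakProj.boundedFrom_iff _ _ _).trans ?_).symm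
  rw [weakProj_outputsAlong]
  simp only [slotOps]
  rw [outputsAlong_sumOps_inr, outputsAlong_sumOps_inr, bddAbove_outputsAlong_tickOps_iff,
    ← Nat.cofinite_eq_atTop, eventually_cofinite]
  simp

theorem weakProj_accepts_iff :
    A.weakProj.Accepts w ↔ ∃ i : Fin (Fintype.card A.Q),
      A.acc.eval (fun c => A.weakProj.BoundedFrom A.weakProj.init w (i, .inl c)) ∧
      A.weakProj.BoundedFrom A.weakProj.init w (i, .inr (.inl ())) ∧
      ¬ A.weakProj.BoundedFrom A.weakProj.init w (i, .inr (.inr ())) := by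
  simp only [Accepts, AcceptsFrom, weakProj]
  rw [BC.eval_any]
  simp [BC.eval, BC.eval_map, Function.comp_def]

theorem accepts_withSet_iff {X : Finset ℕ} {N : ℕ} (hX : ∀ x ∈ X, x < N) :
    A.Accepts (withSet w X) ↔
      A.AcceptsFrom (A.runFrom A.init (withSet w X) N) (suffixFrom (withSet w ∅) N) := by
  rw [Accepts, acceptsFrom_iff_suffixFrom _ _ _ N, suffixFrom_withSet_of_lt w hX]

theorem runFrom_withSet_add {X : Finset ℕ} {N : ℕ} (hX : ∀ x ∈ X, x < N) (k : ℕ) :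
    A.runFrom A.init (withSet w X) (N + k) =
      runSeed A.falseStep w (A.runFrom A.init (withSet w X) N) N k := by
  rw [runFrom_add, suffixFrom_withSet_of_lt w hX, runFrom_suffixFrom_withSet_empty]

theorem weakProj_eval_acc_iff {M : ℕ} {i : Fin (Fintype.card A.Q)}
    (hM : ∀ m, M ≤ m → Survives (A.falseStep · (w m)) (slots A.falseStep w m) i) :
    A.acc.eval (fun c => A.weakProj.BoundedFrom A.weakProj.init w (i, .inl c)) ↔
      A.AcceptsFrom (slots A.falseStep w M i) (suffixFrom (withSet w ∅) M) := by
  rw [AcceptsFrom]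
  congr! 2 with c
  exact A.weakProj_boundedFrom_inl w hM c

theorem exists_accepts_withSet_of_weakProj_accepts (h : A.weakProj.Accepts w) :
    ∃ X : Finset ℕ, A.Accepts (withSet w X) := by
  obtain ⟨i, hacc, hdeaths, hvisits⟩ := (A.weakProj_accepts_iff w).1 h
  obtain ⟨M, hM⟩ := eventually_atTop.1 ((A.weakProj_boundedFrom_deaths_iff w i).1 hdeaths)
  obtain ⟨m, hm, X, hX, hrun⟩ :=
    frequently_atTop.1 ((A.weakProj_not_boundedFrom_visits_iff w i).1 hvisits) M
  refine ⟨X, ?_⟩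
  rw [A.accepts_withSet_iff w hX, hrun,
    ← A.weakProj_eval_acc_iff w fun m' hm' => hM m' (hm.trans hm')]
  exact hacc

theorem weakProj_accepts_of_accepts_withSet {X : Finset ℕ} (h : A.Accepts (withSet w X)) :
    A.weakProj.Accepts w := by
  obtain ⟨N, hX⟩ : ∃ N, ∀ x ∈ X, x < N :=
    ⟨X.sup id + 1, fun x hx => Nat.lt_succ_of_le (Finset.le_sup (f := id) hx)⟩
  obtain ⟨K, i, hsurv, hslot⟩ :=
    exists_slot_survives_forever A.falseStep w N (A.runFrom A.init (withSet w X) N)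
  rw [← A.runFrom_withSet_add w hX] at hslot
  have hXK : ∀ x ∈ X, x < N + K := fun x hx => (hX x hx).trans_le (Nat.le_add_right N K)
  refine (A.weakProj_accepts_iff w).2 ⟨i, ?_, ?_, ?_⟩
  · rw [A.weakProj_eval_acc_iff w hsurv, hslot, ← A.accepts_withSet_iff w hXK]
    exact h
  · exact (A.weakProj_boundedFrom_deaths_iff w i).2 (eventually_atTop.2 ⟨N + K, hsurv⟩)
  · refine (A.weakProj_not_boundedFrom_visits_iff w i).2 <| frequently_atTop.2 fun m =>
      ⟨max m (N + K), le_max_left _ _, X, fun x hx => (hXK x hx).trans_le (le_max_right _ _), ?_⟩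
    obtain ⟨k, hk⟩ := Nat.exists_eq_add_of_le (le_max_right m (N + K))
    rw [hk, slots_add_of_survives _ _ hsurv, hslot, A.runFrom_withSet_add w hXK]

end MaxAutomaton

theorem maxAutomaton_weak_exists_general {α : Type}
    (L : Set (ℕ → α × Bool))
    (h : ∃ A : MaxAutomaton (α × Bool), A.Lang = L) :
    ∃ B : MaxAutomaton α,
      B.Lang = { w : ℕ → α | ∃ X : Finset ℕ, withSet w X ∈ L } := by
  obtain ⟨A, rfl⟩ := h
  exact ⟨A.weakProj, Set.ext fun w => ⟨A.exists_accepts_withSet_of_weakProj_accepts w,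
    fun ⟨_, hX⟩ => A.weakProj_accepts_of_accepts_withSet w hX⟩⟩

/-- Languages recognized by deterministic max-automata are
closed under weak existential (finite-set) quantification. -/
theorem maxAutomaton_weak_exists {α : Type} [Fintype α]
    (L : Set (ℕ → α × Bool))
    (h : ∃ A : MaxAutomaton (α × Bool), A.Lang = L) :
    ∃ B : MaxAutomaton α,
      B.Lang = { w : ℕ → α | ∃ X : Finset ℕ, withSet w X ∈ L } :=
  maxAutomaton_weak_exists_general L h

end MaxReg
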